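/- arXiv:1608.07712 — 13 statements merged into one kernel-verified Lean document; each statement's English description precedes it below -/
import Mathlib

section
/- Let G and P be points of ℝ², let K be the homothety with center G and ratio −1/2 and K⁻¹ the homothety with center G and ratio −2. Let T and T′ be affine automorphisms of ℝ², set Q′ := K(P) and O′ := T⁻¹(K(Q′)), and assume: (i) T′(Q′) = Q′; (ii) T ∘ K⁻¹ ∘ T′ = T′ ∘ K⁻¹ ∘ T; (iii) the map M := T ∘ K⁻¹ ∘ T′ is either a homothety or a translation; (iv) O′ ≠ Q′. Then M is a half-turn (M equals a homothety of ratio −1 about some point) if and only if T(P) = O′. -/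
lemma homothety_inv_pair (G X : ℝ × ℝ) :
    AffineMap.homothety G (-2 : ℝ) (AffineMap.homothety G (-(1/2) : ℝ) X) = X := by
  simp [AffineMap.homothety_apply, smul_smul]

/-- Proposition 2.2, (1) ⇔ (4): with `Q′ = K(P)`, `O′ = T⁻¹(K(Q′))`, assuming
`T′(Q′) = Q′`, the symmetry `T ∘ K⁻¹ ∘ T′ = T′ ∘ K⁻¹ ∘ T`, that `M = T ∘ K⁻¹ ∘ T′`
is a homothety or a translation, and `O′ ≠ Q′`, the map `M` is a half-turn if and
only if `T(P) = O′`. -/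
theorem M_half_turn_iff_TP_eq_O' (G P : ℝ × ℝ)
    (T T' : (ℝ × ℝ) ≃ᵃ[ℝ] (ℝ × ℝ))
    (Q' O' : ℝ × ℝ)
    (hQ' : Q' = AffineMap.homothety G (-(1/2) : ℝ) P)
    (hO' : O' = T.symm (AffineMap.homothety G (-(1/2) : ℝ) Q'))
    (M : (ℝ × ℝ) →ᵃ[ℝ] (ℝ × ℝ))
    (hM : M = (T : (ℝ × ℝ) →ᵃ[ℝ] (ℝ × ℝ)).comp
      ((AffineMap.homothety G (-2 : ℝ)).comp (T' : (ℝ × ℝ) →ᵃ[ℝ] (ℝ × ℝ))))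
    (h1 : T' Q' = Q')
    (h2 : (T : (ℝ × ℝ) →ᵃ[ℝ] (ℝ × ℝ)).comp
        ((AffineMap.homothety G (-2 : ℝ)).comp (T' : (ℝ × ℝ) →ᵃ[ℝ] (ℝ × ℝ))) =
      (T' : (ℝ × ℝ) →ᵃ[ℝ] (ℝ × ℝ)).comp
        ((AffineMap.homothety G (-2 : ℝ)).comp (T : (ℝ × ℝ) →ᵃ[ℝ] (ℝ × ℝ))))
    (h3 : (∃ (c : ℝ × ℝ) (k : ℝ), k ≠ 0 ∧ M = AffineMap.homothety c k) ∨
      (∃ v : ℝ × ℝ, ∀ X : ℝ × ℝ, M X = v + X))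
    (h4 : O' ≠ Q') :
    (∃ c : ℝ × ℝ, M = AffineMap.homothety c (-1 : ℝ)) ↔ T P = O' := by
  -- M Q' = T P
  have hMQ : M Q' = T P := by
    rw [hM]
    simp only [AffineMap.comp_apply, AffineEquiv.coe_toAffineMap]
    rw [h1, hQ', homothety_inv_pair]
  -- T O' = K Q'
  have hTO : T O' = AffineMap.homothety G (-(1/2) : ℝ) Q' := by
    rw [hO']; exact T.apply_symm_apply _
  -- M O' = Q'
  have hMO : M O' = Q' := by
    rw [hM, h2]
    simp only [AffineMap.comp_apply, AffineEquiv.coe_toAffineMap]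
    rw [hTO, homothety_inv_pair, h1]
  constructor
  · rintro ⟨c, hc⟩
    have hinv : ∀ X : ℝ × ℝ, M (M X) = X := by
      intro X
      rw [hc]
      simp [AffineMap.homothety_apply]
    have := hinv O'
    rw [hMO, hMQ] at this
    exact this
  · intro hTP
    have hMQ' : M Q' = O' := by rw [hMQ, hTP]
    rcases h3 with ⟨c, k, hk, hck⟩ | ⟨v, hv⟩
    · -- k • (Q' - O') = O' - Q'
      have e1 : M Q' - M O' = k • (Q' - O') := by
        rw [hck]
        simp [AffineMap.homothety_apply]
        module
      rw [hMQ', hMO] at e1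
      have e2 : (k + 1) • (Q' - O') = 0 := by
        rw [add_smul, one_smul, ← e1]
        abel
      rcases smul_eq_zero.mp e2 with h | h
      · have : k = -1 := by linarith
        exact ⟨c, by rw [hck, this]⟩
      · exact absurd (by rw [eq_comm, ← sub_eq_zero]; exact h) h4
    · exfalso
      have e1 := hv Q'
      have e2 := hv O'
      rw [hMQ'] at e1
      rw [hMO] at e2
      apply h4
      have : O' - Q' = Q' - O' := by
        linear_combination e1 - e2
      have h2' : (2 : ℝ) • (O' - Q') = 0 := by
        rw [two_smul]
        nth_rewrite 2 [this]
        abel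
      have := (smul_eq_zero.mp h2').resolve_left (by norm_num)
      rw [sub_eq_zero] at this
      exact this
end

section
/- For all real numbers x, y, z, the identity x(y+z)² + y(z−x)² + z(x−y)² = x²(y+z) + y²(z+x) + z²(x+y) − 2xyz holds (together with its two cyclic analogues). Consequently, setting s := (x(y+z)², y(z+x)², z(x+y)²) and k := (y(z−x)² + z(x−y)², z(x−y)² + x(y−z)², x(y−z)² + y(z−x)²), one has s = −k if and only if E(x,y,z) := x²(y+z) + y²(z+x) + z²(x+y) − 2xyz = 0. -/
/-- The identity `x(y+z)² + y(z−x)² + z(x−y)² = x²(y+z) + y²(z+x) + z²(x+y) − 2xyz`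
(together with its two cyclic analogues), and the consequence that
`S = K(Z)` (i.e. `s = -k`) holds if and only if `E(x,y,z) = 0`. -/
theorem cevian_halfturn_identity (x y z : ℝ) :
    (x * (y + z) ^ 2 + y * (z - x) ^ 2 + z * (x - y) ^ 2 =
      x ^ 2 * (y + z) + y ^ 2 * (z + x) + z ^ 2 * (x + y) - 2 * x * y * z) ∧
    (y * (z + x) ^ 2 + z * (x - y) ^ 2 + x * (y - z) ^ 2 =
      x ^ 2 * (y + z) + y ^ 2 * (z + x) + z ^ 2 * (x + y) - 2 * x * y * z) ∧
    (z * (x + y) ^ 2 + x * (y - z) ^ 2 + y * (z - x) ^ 2 =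
      x ^ 2 * (y + z) + y ^ 2 * (z + x) + z ^ 2 * (x + y) - 2 * x * y * z) ∧
    (((x * (y + z) ^ 2, y * (z + x) ^ 2, z * (x + y) ^ 2) : ℝ × ℝ × ℝ) =
        -((y * (z - x) ^ 2 + z * (x - y) ^ 2,
           z * (x - y) ^ 2 + x * (y - z) ^ 2,
           x * (y - z) ^ 2 + y * (z - x) ^ 2) : ℝ × ℝ × ℝ) ↔
      x ^ 2 * (y + z) + y ^ 2 * (z + x) + z ^ 2 * (x + y) - 2 * x * y * z = 0) := by
  refine ⟨by ring, by ring, by ring, ?_⟩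
  rw [Prod.ext_iff, Prod.ext_iff]
  simp only [Prod.fst_neg, Prod.snd_neg, Prod.fst, Prod.snd]
  constructor
  · rintro ⟨h1, h2, h3⟩
    nlinarith [h1]
  · intro h
    refine ⟨by nlinarith, by nlinarith, by nlinarith⟩
end

section
/- Let x, y, z be real numbers with x + y + z = 1, xyz ≠ 0, σ := xy + yz + zx ≠ 0, and E(x,y,z) := x²(y+z) + y²(z+x) + z²(x+y) − 2xyz = 0. In ℝ³ define the points P := (x,y,z), G := (1/3,1/3,1/3), P′ := (yz/σ, zx/σ, xy/σ), Q := G − (1/2)(P′ − G), V := 2Q − P, S := (x(y+z)², y(z+x)², z(x+y)²)/(8xyz), and Z := (x(y−z)², y(z−x)², z(x−y)²)/(−4xyz). Then S − G = (5/3)(V − S) and G − Z = (5/4)(V − G); that is, the signed ratios satisfy GS/SV = 5/3 and ZG/GV = 5/4. -/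
/-!
Since `E = (x + y + z)σ - 5xyz`, on the normalized curve `E = 0` one has `σ = 5xyz`. Then
`P' = (1/(5x), 1/(5y), 1/(5z))`, and `yz(5x - 1) = σ - yz = x(y + z) = x(1 - x)` gives
`x(y + z)²/(xyz) = 6 - 5x - 1/x`. So the first coordinates of `V`, `S` and `Z` are explicit
functions of `x` alone, for which both ratios are a one-line check; the other coordinates follow
by cyclic symmetry.
-/

def cevianE (x y z : ℝ) : ℝ :=
  x ^ 2 * (y + z) + y ^ 2 * (z + x) + z ^ 2 * (x + y) - 2 * x * y * z

theorem cevianE_eq (x y z : ℝ) :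
    cevianE x y z = (x + y + z) * (x * y + y * z + z * x) - 5 * (x * y * z) := by
  unfold cevianE; ring

theorem mul_sub_sq_div_eq {a b c : ℝ} (h : a * b * c ≠ 0) :
    a * (b - c) ^ 2 / (a * b * c) = a * (b + c) ^ 2 / (a * b * c) - 4 := by
  rw [div_sub' h]
  ring

/-- Normalized barycentrics of a point off the sidelines with `E = 0`, the last condition in the
form `σ = 5xyz` (see `cevianE_eq`). -/
structure LiesOnE (x y z : ℝ) : Prop where
  sum_eq_one : x + y + z = 1
  mul_mul_ne_zero : x * y * z ≠ 0
  sigma_eq : x * y + y * z + z * x = 5 * (x * y * z)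

theorem LiesOnE.of_cevianE_eq_zero {x y z : ℝ} (h1 : x + y + z = 1) (h2 : x * y * z ≠ 0)
    (hE : cevianE x y z = 0) : LiesOnE x y z where
  sum_eq_one := h1
  mul_mul_ne_zero := h2
  sigma_eq := by linear_combination hE - cevianE_eq x y z - (x * y + y * z + z * x) * h1

namespace LiesOnE

variable {a b c : ℝ} (h : LiesOnE a b c)
include h

theorem rotate : LiesOnE b c a where
  sum_eq_one := by linear_combination h.sum_eq_one
  mul_mul_ne_zero := mul_rotate a b c ▸ h.mul_mul_ne_zero
  sigma_eq := by linear_combination h.sigma_eq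

theorem ne_zero : a ≠ 0 := left_ne_zero_of_mul (left_ne_zero_of_mul h.mul_mul_ne_zero)

theorem isotomic_coord : b * c / (a * b + b * c + c * a) = 1 / (5 * a) := by
  have := h.ne_zero
  have := h.rotate.ne_zero
  have := h.rotate.rotate.ne_zero
  rw [h.sigma_eq]
  field_simp

theorem mul_five_mul_sub_one : b * c * (5 * a - 1) = a * (1 - a) := by
  linear_combination -h.sigma_eq + a * h.sum_eq_one

theorem mul_sq_div : a * (b + c) ^ 2 / (a * b * c) = 6 - 5 * a - 1 / a := by
  have := h.ne_zero
  have := h.rotate.ne_zero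
  have := h.rotate.rotate.ne_zero
  field_simp
  linear_combination (a - 1) * h.mul_five_mul_sub_one + a * (b + c + 1 - a) * h.sum_eq_one

theorem insimilicenter_ratio_coord :
    a * (b + c) ^ 2 / (8 * a * b * c) - 1 / 3 =
      5 / 3 * ((1 - a - b * c / (a * b + b * c + c * a)) - a * (b + c) ^ 2 / (8 * a * b * c)) := by
  rw [h.isotomic_coord]
  linear_combination (1 / 3 : ℝ) * h.mul_sq_div

theorem conicCenter_ratio_coord :
    1 / 3 - a * (b - c) ^ 2 / (-4 * a * b * c) =
      5 / 4 * ((1 - a - b * c / (a * b + b * c + c * a)) - 1 / 3) := by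
  rw [h.isotomic_coord]
  linear_combination (1 / 4 : ℝ) * h.mul_sq_div + (1 / 4 : ℝ) * mul_sub_sq_div_eq h.mul_mul_ne_zero

end LiesOnE

theorem ratios_GS_SV_and_ZG_GV_general (x y z : ℝ)
    (h1 : x + y + z = 1) (h2 : x * y * z ≠ 0)
    (hE : x ^ 2 * (y + z) + y ^ 2 * (z + x) + z ^ 2 * (x + y) - 2 * x * y * z = 0)
    (P G P' Q V S Z : ℝ × ℝ × ℝ)
    (hP : P = (x, y, z))
    (hG : G = (1/3, 1/3, 1/3))
    (hP' : P' = (y * z / (x * y + y * z + z * x), z * x / (x * y + y * z + z * x),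
      x * y / (x * y + y * z + z * x)))
    (hQ : Q = G - (1/2 : ℝ) • (P' - G))
    (hV : V = (2 : ℝ) • Q - P)
    (hS : S = (x * (y + z) ^ 2 / (8 * x * y * z), y * (z + x) ^ 2 / (8 * x * y * z),
      z * (x + y) ^ 2 / (8 * x * y * z)))
    (hZ : Z = (x * (y - z) ^ 2 / (-4 * x * y * z), y * (z - x) ^ 2 / (-4 * x * y * z),
      z * (x - y) ^ 2 / (-4 * x * y * z))) :
    S - G = (5/3 : ℝ) • (V - S) ∧ G - Z = (5/4 : ℝ) • (V - G) := by
  have h := LiesOnE.of_cevianE_eq_zero h1 h2 hE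
  subst hP hG hP' hQ hV hS hZ
  refine ⟨Prod.ext ?_ (Prod.ext ?_ ?_), Prod.ext ?_ (Prod.ext ?_ ?_)⟩ <;>
    simp only [Prod.fst_sub, Prod.snd_sub, Prod.smul_fst, Prod.smul_snd, smul_eq_mul]
  · linear_combination h.insimilicenter_ratio_coord
  · linear_combination h.rotate.insimilicenter_ratio_coord
  · linear_combination h.rotate.rotate.insimilicenter_ratio_coord
  · linear_combination h.conicCenter_ratio_coord
  · linear_combination h.rotate.conicCenter_ratio_coord
  · linear_combination h.rotate.rotate.conicCenter_ratio_coord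

/-- Proposition 2.3(3) in barycentric coordinates: if `E(x,y,z) = 0` then the signed
ratios satisfy `GS/SV = 5/3` and `ZG/GV = 5/4`. -/
theorem ratios_GS_SV_and_ZG_GV (x y z : ℝ)
    (h1 : x + y + z = 1) (h2 : x * y * z ≠ 0)
    (h3 : x * y + y * z + z * x ≠ 0)
    (hE : x ^ 2 * (y + z) + y ^ 2 * (z + x) + z ^ 2 * (x + y) - 2 * x * y * z = 0)
    (P G P' Q V S Z : ℝ × ℝ × ℝ)
    (hP : P = (x, y, z))
    (hG : G = (1/3, 1/3, 1/3))
    (hP' : P' = (y * z / (x * y + y * z + z * x), z * x / (x * y + y * z + z * x),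
      x * y / (x * y + y * z + z * x)))
    (hQ : Q = G - (1/2 : ℝ) • (P' - G))
    (hV : V = (2 : ℝ) • Q - P)
    (hS : S = (x * (y + z) ^ 2 / (8 * x * y * z), y * (z + x) ^ 2 / (8 * x * y * z),
      z * (x + y) ^ 2 / (8 * x * y * z)))
    (hZ : Z = (x * (y - z) ^ 2 / (-4 * x * y * z), y * (z - x) ^ 2 / (-4 * x * y * z),
      z * (x - y) ^ 2 / (-4 * x * y * z))) :
    S - G = (5/3 : ℝ) • (V - S) ∧ G - Z = (5/4 : ℝ) • (V - G) :=
  ratios_GS_SV_and_ZG_GV_general x y z h1 h2 hE P G P' Q V S Z hP hG hP' hQ hV hS hZ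
end

section
/- Let G, V, Z be three distinct collinear points of ℝ² with G − Z = (5/4)(V − G), let P be a point not on line GZ, and define Q′ := G − (1/2)(P − G), P′ := 2Q′ − V, Q := midpoint(P, V), S := G − (1/2)(Z − G). Let q(X) = B(X − Z, X − Z) + c (B a nonzero symmetric bilinear form, c ∈ ℝ) vanish at P, P′, Q, Q′, and assume Q ≠ S. Then the line through Q and S meets the conic q = 0 only at Q: for every real t, q(Q + t(S − Q)) = 0 implies t = 0. -/
/-!
Work in the basis `u = P - G`, `z = Z - G`, which is a basis because `P ∉ GZ`. Since
`V - G = -(4/5) z`, every point of the configuration has explicit coordinates relative to `Z`,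
and the four vanishing conditions force `B u u = 4b`, `B z z = (5/2) b`, `c = -(9/2) b` with
`b = B u z`. On the line `Q + t (S - Q)` the conic then reads `(9/8) b t² = 0`, and `b ≠ 0`
because otherwise `B` vanishes on the basis.
-/

theorem linearIndependent_vsub_of_notMem_line {k V P : Type*} [Field k] [AddCommGroup V]
    [Module k V] [AddTorsor V P] {a b p : P} (hab : a ≠ b) (hp : p ∉ line[k, a, b]) :
    LinearIndependent k ![p -ᵥ a, b -ᵥ a] := by
  refine linearIndependent_fin2.2 ⟨by simpa using vsub_ne_zero.2 hab.symm, fun r hr => hp ?_⟩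
  rw [← vsub_vadd p a]
  exact vadd_left_mem_affineSpan_pair.2 ⟨r, hr⟩

theorem LinearMap.eq_zero_of_apply_pair_eq_zero {K M : Type*} [Field K] [AddCommGroup M]
    [Module K M] [FiniteDimensional K M] (hM : Module.finrank K M = 2) {u w : M}
    (hind : LinearIndependent K ![u, w]) {B : M →ₗ[K] M →ₗ[K] K}
    (huu : B u u = 0) (huw : B u w = 0) (hwu : B w u = 0) (hww : B w w = 0) : B = 0 := by
  let b := basisOfLinearIndependentOfCardEqFinrank hind (by simp [hM])
  refine LinearMap.ext_basis b b fun i j => ?_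
  fin_cases i <;> fin_cases j <;> simpa [b]

theorem LinearMap.apply_smul_add_smul_self {R M : Type*} [CommRing R] [AddCommGroup M]
    [Module R M] (B : M →ₗ[R] M →ₗ[R] R) {u w : M} (hsymm : B w u = B u w) (α β : R) :
    B (α • u + β • w) (α • u + β • w) = α ^ 2 * B u u + 2 * α * β * B u w + β ^ 2 * B w w := by
  simp only [map_add, map_smul, LinearMap.add_apply, LinearMap.smul_apply, smul_eq_mul, hsymm]
  ring

theorem tangent_at_Q_is_QKZ_general (G V Z : ℝ × ℝ)
    (hGZ : G ≠ Z)
    (hratio : G - Z = (5/4 : ℝ) • (V - G))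
    (P : ℝ × ℝ) (hP : P ∉ line[ℝ, G, Z])
    (Q' P' Q S : ℝ × ℝ)
    (hQ' : Q' = G - (1/2 : ℝ) • (P - G))
    (hP' : P' = (2 : ℝ) • Q' - V)
    (hQ : Q = midpoint ℝ P V)
    (hS : S = G - (1/2 : ℝ) • (Z - G))
    (B : (ℝ × ℝ) →ₗ[ℝ] (ℝ × ℝ) →ₗ[ℝ] ℝ) (c : ℝ)
    (hB : B ≠ 0) (hBsymm : ∀ u v, B u v = B v u)
    (hvanish : ∀ X ∈ ({P, P', Q, Q'} : Set (ℝ × ℝ)), B (X - Z) (X - Z) + c = 0) :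
    ∀ t : ℝ, B (Q + t • (S - Q) - Z) (Q + t • (S - Q) - Z) + c = 0 → t = 0 := by
  intro t ht
  set u := P - G
  set z := Z - G
  have hV : V = G - (4/5 : ℝ) • z := by linear_combination (norm := module) (-(4/5) : ℝ) • hratio
  have hQ₀ : Q = (1/2 : ℝ) • (P + V) := by rw [hQ, midpoint_eq_smul_add, invOf_eq_inv, one_div]
  have coords (X : ℝ × ℝ) (α β : ℝ) (hX : X - Z = α • u + β • z) :
      B (X - Z) (X - Z) + c = α ^ 2 * B u u + 2 * α * β * B u z + β ^ 2 * B z z + c := by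
    rw [hX, B.apply_smul_add_smul_self (hBsymm z u)]
  have eP := (coords P 1 (-1) (by module)).symm.trans (hvanish P (by simp))
  have eP' := (coords P' (-1) (-1/5) (by rw [hP', hQ', hV]; module)).symm.trans
    (hvanish P' (by simp))
  have eQ := (coords Q (1/2) (-7/5) (by rw [hQ₀, hV]; module)).symm.trans (hvanish Q (by simp))
  have eQ' := (coords Q' (-1/2) (-1) (by rw [hQ']; module)).symm.trans (hvanish Q' (by simp))
  have eL := coords (Q + t • (S - Q)) ((1 - t) / 2) (-(7/5 + t/10)) (by rw [hQ₀, hS, hV]; module)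
  have huu : B u u = 4 * B u z := by linarith
  have hzz : B z z = 5/2 * B u z := by linarith
  have hc : c = -(9/2) * B u z := by linarith
  have huz : B u z ≠ 0 := fun h => hB <|
    LinearMap.eq_zero_of_apply_pair_eq_zero (by simp)
      (by simpa using linearIndependent_vsub_of_notMem_line (k := ℝ) hGZ hP)
      (by rw [huu, h, mul_zero]) h (by rw [hBsymm, h]) (by rw [hzz, h, mul_zero])
  have hline : 9/8 * B u z * t ^ 2 = 0 := by
    rw [ht, huu, hzz, hc] at eL
    linear_combination -eL
  simpa [huz] using hline

/-- Lemma 3.2: if `ZG/GV = 5/4` then the line `Q K(Z)` meets the conic only at `Q`,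
i.e. it is the tangent to the conic at `Q`. -/
theorem tangent_at_Q_is_QKZ (G V Z : ℝ × ℝ)
    (hcol : Collinear ℝ ({G, V, Z} : Set (ℝ × ℝ)))
    (hGV : G ≠ V) (hVZ : V ≠ Z) (hGZ : G ≠ Z)
    (hratio : G - Z = (5/4 : ℝ) • (V - G))
    (P : ℝ × ℝ) (hP : P ∉ line[ℝ, G, Z])
    (Q' P' Q S : ℝ × ℝ)
    (hQ' : Q' = G - (1/2 : ℝ) • (P - G))
    (hP' : P' = (2 : ℝ) • Q' - V)
    (hQ : Q = midpoint ℝ P V)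
    (hS : S = G - (1/2 : ℝ) • (Z - G))
    (B : (ℝ × ℝ) →ₗ[ℝ] (ℝ × ℝ) →ₗ[ℝ] ℝ) (c : ℝ)
    (hB : B ≠ 0) (hBsymm : ∀ u v, B u v = B v u)
    (hvanish : ∀ X ∈ ({P, P', Q, Q'} : Set (ℝ × ℝ)), B (X - Z) (X - Z) + c = 0)
    (hQS : Q ≠ S) :
    ∀ t : ℝ, B (Q + t • (S - Q) - Z) (Q + t • (S - Q) - Z) + c = 0 → t = 0 :=
  tangent_at_Q_is_QKZ_general G V Z hGZ hratio P hP Q' P' Q S hQ' hP' hQ hS B c hB hBsymm hvanish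
end

section
/- Let G, V, Z be three distinct collinear points of ℝ² with G − Z = (5/4)(V − G), let P be a point not on line GZ, and define Q′ := G − (1/2)(P − G), P′ := 2Q′ − V, Q := midpoint(P, V). Let q(X) = B(X − Z, X − Z) + c (B a nonzero symmetric bilinear form, c ∈ ℝ) vanish at P, P′, Q, Q′. Then the bilinear form B is definite: either B(w,w) > 0 for all nonzero w, or B(w,w) < 0 for all nonzero w. In particular the conic q = 0 is an ellipse. -/
/-!
Put `u = V - G` and `p = P - Z`, so `Z = G - (5/4) u` and the points `P, P′, Q` are
`Z + p`, `Z + (3/2) u - p`, `Z + (9/8) u + (1/2) p`. The three conditions `q = 0` there force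
`B(u, p) = (3/4) B(u, u)` and `B(p, p) = (45/16) B(u, u)`. Since `P ∉ GZ`, `(u, p)` is a basis,
so `B ≠ 0` gives `B(u, u) ≠ 0` and the Gram determinant `(9/4) B(u, u)²` is positive; a
symmetric form on a plane with positive Gram determinant is definite (complete the square).
-/

open Module Submodule

theorem span_pair_eq_top_of_finrank_eq_two {K V : Type*} [Field K] [AddCommGroup V]
    [Module K V] (hV : finrank K V = 2) {u p : V} (hu : u ≠ 0) (hp : ∀ a : K, a • u ≠ p) :
    span K {u, p} = ⊤ := by
  have hli : LinearIndependent K ![u, p] := (LinearIndependent.pair_iff' hu).2 hp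
  have := hli.span_eq_top_of_card_eq_finrank (by simp [hV])
  rwa [Matrix.range_cons_cons_empty] at this

theorem left_ne_zero_of_sq_lt_mul {a b d : ℝ} (h : b ^ 2 < a * d) : a ≠ 0 := by
  rintro rfl
  exact (sq_nonneg b).not_gt (by simpa using h)

namespace LinearMap

section CommRing

variable {R M : Type*} [CommRing R] [AddCommGroup M] [Module R M] {u p : M}

theorem apply_smul_add_smul_self_s8 {B : M →ₗ[R] M →ₗ[R] R} (hsymm : B p u = B u p) (x y : R) :
    B (x • u + y • p) (x • u + y • p) = x * x * B u u + 2 * x * y * B u p + y * y * B p p := by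
  simp only [map_add, map_smul, add_apply, smul_apply, hsymm, smul_eq_mul]
  ring

theorem eq_zero_of_span_pair {N : Type*} [AddCommGroup N] [Module R N]
    {B : M →ₗ[R] M →ₗ[R] N} (hspan : span R {u, p} = ⊤) (hsymm : B p u = B u p)
    (huu : B u u = 0) (hup : B u p = 0) (hpp : B p p = 0) : B = 0 := by
  refine ext_on hspan ?_
  rintro x (rfl | rfl) <;> refine ext_on hspan ?_ <;> rintro y (rfl | rfl) <;>
    simp [huu, hup, hpp, hsymm]

end CommRing

variable {M : Type*} [AddCommGroup M] [Module ℝ M] {B : M →ₗ[ℝ] M →ₗ[ℝ] ℝ} {u p : M}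

theorem mul_apply_self_pos_of_sq_lt_mul (hspan : span ℝ {u, p} = ⊤) (hsymm : B p u = B u p)
    (hdet : B u p ^ 2 < B u u * B p p) {w : M} (hw : w ≠ 0) : 0 < B u u * B w w := by
  obtain ⟨s, t, rfl⟩ := mem_span_pair.1 (hspan ▸ mem_top : w ∈ span ℝ {u, p})
  rw [apply_smul_add_smul_self_s8 hsymm]
  have hsq : B u u * (s * s * B u u + 2 * s * t * B u p + t * t * B p p)
      = (B u u * s + B u p * t) ^ 2 + (B u u * B p p - B u p ^ 2) * t ^ 2 := by ring
  rw [hsq]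
  rcases eq_or_ne t 0 with rfl | ht
  · have hs : s ≠ 0 := by rintro rfl; simp at hw
    have ha := left_ne_zero_of_sq_lt_mul hdet
    simp only [mul_zero, add_zero]
    positivity
  · nlinarith [sq_nonneg (B u u * s + B u p * t), sq_pos_of_ne_zero ht]

theorem definite_of_sq_lt_mul (hspan : span ℝ {u, p} = ⊤) (hsymm : B p u = B u p)
    (hdet : B u p ^ 2 < B u u * B p p) :
    (∀ w, w ≠ 0 → 0 < B w w) ∨ (∀ w, w ≠ 0 → B w w < 0) := by
  have hpos := fun w (hw : w ≠ 0) ↦ mul_apply_self_pos_of_sq_lt_mul hspan hsymm hdet hw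
  rcases lt_or_gt_of_ne (left_ne_zero_of_sq_lt_mul hdet) with ha | ha
  · exact .inr fun w hw ↦ neg_of_mul_pos_right (hpos w hw) ha.le
  · exact .inl fun w hw ↦ pos_of_mul_pos_right (hpos w hw) ha.le

end LinearMap

theorem conic_is_ellipse_general (G V Z : ℝ × ℝ)
    (hGV : G ≠ V)
    (hratio : G - Z = (5/4 : ℝ) • (V - G))
    (P : ℝ × ℝ) (hP : P ∉ line[ℝ, G, Z])
    (Q' P' Q : ℝ × ℝ)
    (hQ' : Q' = G - (1/2 : ℝ) • (P - G))
    (hP' : P' = (2 : ℝ) • Q' - V)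
    (hQ : Q = midpoint ℝ P V)
    (B : (ℝ × ℝ) →ₗ[ℝ] (ℝ × ℝ) →ₗ[ℝ] ℝ) (c : ℝ)
    (hB : B ≠ 0) (hBsymm : ∀ u v, B u v = B v u)
    (hvanish : ∀ X ∈ ({P, P', Q, Q'} : Set (ℝ × ℝ)), B (X - Z) (X - Z) + c = 0) :
    (∀ w : ℝ × ℝ, w ≠ 0 → 0 < B w w) ∨ (∀ w : ℝ × ℝ, w ≠ 0 → B w w < 0) := by
  obtain ⟨u, rfl⟩ : ∃ u, V = G + u := ⟨V - G, by abel⟩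
  obtain rfl : Z = G - (5/4 : ℝ) • u := by linear_combination (norm := module) -hratio
  obtain ⟨p, hPp⟩ : ∃ p, P = G - (5/4 : ℝ) • u + p := ⟨P - (G - (5/4 : ℝ) • u), by abel⟩
  have hp : ∀ a : ℝ, a • u ≠ p := by
    rintro a rfl
    refine hP ?_
    rw [hPp]
    -- `Z - G = -(5/4) u`, so `Z + a u` is the point of parameter `1 - (4/5) a` on line `GZ`
    convert AffineMap.lineMap_mem_affineSpan_pair (1 - 4/5 * a : ℝ) G _ using 1
    rw [AffineMap.lineMap_apply_module']
    module
  have hspan := span_pair_eq_top_of_finrank_eq_two (by simp) (by simpa using hGV) hp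
  have hsymm := hBsymm p u
  have vanish_coords (x y : ℝ) {w : ℝ × ℝ} (hw : B w w + c = 0) (hxy : w = x • u + y • p) :
      x * x * B u u + 2 * x * y * B u p + y * y * B p p + c = 0 := by
    rwa [← LinearMap.apply_smul_add_smul_self_s8 hsymm, ← hxy]
  have hPc := vanish_coords 0 1 (hvanish P (by simp)) (by rw [hPp]; module)
  have hP'c := vanish_coords (3/2) (-1) (hvanish P' (by simp)) (by rw [hP', hQ', hPp]; module)
  have hQc := vanish_coords (9/8) (1/2) (hvanish Q (by simp))
    (by rw [hQ, hPp, midpoint_eq_smul_add, invOf_eq_inv]; module)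
  have hb : B u p = 3/4 * B u u := by linarith
  have hd : B p p = 45/16 * B u u := by linarith
  have ha : B u u ≠ 0 := fun ha ↦ hB <| LinearMap.eq_zero_of_span_pair hspan hsymm ha
    (by rw [hb, ha, mul_zero]) (by rw [hd, ha, mul_zero])
  refine LinearMap.definite_of_sq_lt_mul hspan hsymm ?_
  rw [hb, hd]
  nlinarith [sq_pos_of_ne_zero ha]

/-- In the configuration of Lemmas 3.1 and 3.2 (with `ZG/GV = 5/4`), the bilinear
form defining the conic through `P, P′, Q, Q′` with center `Z` is definite; hence the
conic is an ellipse. -/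
theorem conic_is_ellipse (G V Z : ℝ × ℝ)
    (hcol : Collinear ℝ ({G, V, Z} : Set (ℝ × ℝ)))
    (hGV : G ≠ V) (hVZ : V ≠ Z) (hGZ : G ≠ Z)
    (hratio : G - Z = (5/4 : ℝ) • (V - G))
    (P : ℝ × ℝ) (hP : P ∉ line[ℝ, G, Z])
    (Q' P' Q : ℝ × ℝ)
    (hQ' : Q' = G - (1/2 : ℝ) • (P - G))
    (hP' : P' = (2 : ℝ) • Q' - V)
    (hQ : Q = midpoint ℝ P V)
    (B : (ℝ × ℝ) →ₗ[ℝ] (ℝ × ℝ) →ₗ[ℝ] ℝ) (c : ℝ)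
    (hB : B ≠ 0) (hBsymm : ∀ u v, B u v = B v u)
    (hvanish : ∀ X ∈ ({P, P', Q, Q'} : Set (ℝ × ℝ)), B (X - Z) (X - Z) + c = 0) :
    (∀ w : ℝ × ℝ, w ≠ 0 → 0 < B w w) ∨ (∀ w : ℝ × ℝ, w ≠ 0 → B w w < 0) :=
  conic_is_ellipse_general G V Z hGV hratio P hP Q' P' Q hQ' hP' hQ B c hB hBsymm hvanish
end

section
/- Let G, V, Z be three distinct collinear points of ℝ² with G − Z = (5/4)(V − G), let P be a point not on line GZ, and define Q′ := G − (1/2)(P − G), P′ := 2Q′ − V, Q := midpoint(P, V). Let q(X) = B(X − Z, X − Z) + c (B a nonzero symmetric bilinear form, c ∈ ℝ) vanish at P, P′, Q, Q′, and let K(W) := G − (1/2)(W − G). Then P and P′ are the only points of the conic whose complement also lies on the conic: for every point R with q(R) = 0 and q(K(R)) = 0, one has R = P or R = P′. -/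
/-!
In the affine frame `(Z; G - Z, P - G)` the points `P`, `P'`, `Q'` have coordinates `(1, 1)`,
`(1/5, -1)`, `(1, -1/2)`. Vanishing there determines the conic up to the nonzero factor
`B (G - Z) (G - Z) / 5`: it is `5x² - 4xy + 8y² = 9`. The complement map acts by
`(x, y) ↦ ((3 - x)/2, -y/2)`, and subtracting the equations of `R` and `K(R)` leaves the line
`5x - 2y = 3`, which meets the conic only at `P` and `P'`.
-/

open Module

theorem linearIndependent_vsub_of_notMem_affineSpan_pair {k V P : Type*} [Field k]
    [AddCommGroup V] [Module k V] [AddTorsor V P] {a b p : P} (hab : a ≠ b)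
    (hp : p ∉ line[k, a, b]) : LinearIndependent k ![a -ᵥ b, p -ᵥ a] := by
  refine (LinearIndependent.pair_iff' (vsub_ne_zero.2 hab)).2 fun r hr => hp ?_
  rw [← vsub_vadd p a, ← hr, vadd_left_mem_affineSpan_pair]
  exact ⟨-r, by rw [← neg_vsub_eq_vsub_rev, smul_neg, neg_smul, neg_neg]⟩

theorem LinearIndependent.exists_smul_add_smul_eq {k M : Type*} [Field k] [AddCommGroup M]
    [Module k M] {u v : M} (h : LinearIndependent k ![u, v]) (hM : finrank k M = 2) (x : M) :
    ∃ a b : k, a • u + b • v = x := by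
  have hspan := h.span_eq_top_of_card_eq_finrank (by simp [hM])
  rw [← Submodule.mem_span_pair, ← Matrix.range_cons_cons_empty, hspan]
  trivial

namespace LinearMap

variable {R M : Type*} [CommRing R] [AddCommGroup M] [Module R M] (B : M →ₗ[R] M →ₗ[R] R)
  {u v : M}

theorem apply_smul_add_smul_self_of_comm (huv : B v u = B u v) (x y : R) :
    B (x • u + y • v) (x • u + y • v) = x ^ 2 * B u u + 2 * x * y * B u v + y ^ 2 * B v v := by
  simp only [map_add, map_smul, add_apply, smul_apply, smul_eq_mul, huv]
  ring

theorem apply_self_ne_zero_of_ne_zero (hspan : ∀ w, ∃ x y : R, x • u + y • v = w)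
    (hB : B ≠ 0) (huv : B v u = B u v) {β δ : R} (hβ : B u v = β * B u u)
    (hδ : B v v = δ * B u u) : B u u ≠ 0 := by
  intro hu
  refine hB (ext₂ fun w w' => ?_)
  obtain ⟨x, y, rfl⟩ := hspan w
  obtain ⟨x', y', rfl⟩ := hspan w'
  simp [huv, hβ, hδ, hu]

end LinearMap

section Conic

variable {k M : Type*} [Field k] [CharZero k] [AddCommGroup M] [Module k M]
  (B : M →ₗ[k] M →ₗ[k] k) {u v : M} {c : k}

theorem conic_coeffs_of_vanish (huv : B v u = B u v)
    (hP : B (u + v) (u + v) + c = 0)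
    (hP' : B ((5 : k)⁻¹ • u - v) ((5 : k)⁻¹ • u - v) + c = 0)
    (hQ' : B (u - (2 : k)⁻¹ • v) (u - (2 : k)⁻¹ • v) + c = 0) :
    B u v = -(2 / 5) * B u u ∧ B v v = 8 / 5 * B u u ∧ c = -(9 / 5) * B u u := by
  simp only [map_add, map_sub, map_smul, LinearMap.add_apply, LinearMap.sub_apply,
    LinearMap.smul_apply, smul_eq_mul, huv] at hP hP' hQ'
  refine ⟨?_, ?_, ?_⟩
  · linear_combination (5 / 12) * (hP - hP')
  · linear_combination (4 / 3) * (hP - hQ') - (5 / 3) * (hP - hP')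
  · linear_combination hP + (5 / 6) * (hP - hP') - (4 / 3) * (hP - hQ')

theorem conic_vanish_iff (huv : B v u = B u v) (hb : B u v = -(2 / 5) * B u u)
    (hd : B v v = 8 / 5 * B u u) (hc : c = -(9 / 5) * B u u) (ha : B u u ≠ 0) (x y : k) :
    B (x • u + y • v) (x • u + y • v) + c = 0 ↔ 5 * x ^ 2 - 4 * x * y + 8 * y ^ 2 = 9 := by
  rw [B.apply_smul_add_smul_self_of_comm huv, hb, hd, hc]
  constructor
  · intro h
    exact mul_left_cancel₀ ha (by linear_combination 5 * h)
  · intro h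
    linear_combination (1 / 5) * B u u * h

end Conic

theorem complement_coords_of_conic {k : Type*} [Field k] [CharZero k] {x y : k}
    (h : 5 * x ^ 2 - 4 * x * y + 8 * y ^ 2 = 9)
    (hK : 5 * ((3 - x) / 2) ^ 2 - 4 * ((3 - x) / 2) * (-y / 2) + 8 * (-y / 2) ^ 2 = 9) :
    x = 1 ∧ y = 1 ∨ x = 1 / 5 ∧ y = -1 := by
  have hy : y = (5 * x - 3) / 2 := by linear_combination (1 / 3) * (hK - h / 4)
  subst hy
  have hx : (x - 1) * (5 * x - 1) = 0 := by linear_combination (1 / 9) * h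
  rcases mul_eq_zero.1 hx with hx | hx
  · exact .inl ⟨by linear_combination hx, by linear_combination (5 / 2) * hx⟩
  · exact .inr ⟨by linear_combination (1 / 5) * hx, by linear_combination (1 / 2) * hx⟩

theorem only_P_P'_have_complement_on_conic_general (G V Z : ℝ × ℝ)
    (hGZ : G ≠ Z)
    (hratio : G - Z = (5/4 : ℝ) • (V - G))
    (P : ℝ × ℝ) (hP : P ∉ line[ℝ, G, Z])
    (Q' P' Q : ℝ × ℝ)
    (hQ' : Q' = G - (1/2 : ℝ) • (P - G))
    (hP' : P' = (2 : ℝ) • Q' - V)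
    (B : (ℝ × ℝ) →ₗ[ℝ] (ℝ × ℝ) →ₗ[ℝ] ℝ) (c : ℝ)
    (hB : B ≠ 0) (hBsymm : ∀ u v, B u v = B v u)
    (hvanish : ∀ X ∈ ({P, P', Q, Q'} : Set (ℝ × ℝ)), B (X - Z) (X - Z) + c = 0) :
    ∀ R : ℝ × ℝ, B (R - Z) (R - Z) + c = 0 →
      B ((G - (1/2 : ℝ) • (R - G)) - Z) ((G - (1/2 : ℝ) • (R - G)) - Z) + c = 0 →
      R = P ∨ R = P' := by
  intro R hR hKR
  have hli : LinearIndependent ℝ ![G - Z, P - G] := by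
    simpa only [vsub_eq_sub] using linearIndependent_vsub_of_notMem_affineSpan_pair hGZ hP
  have hspan := hli.exists_smul_add_smul_eq (by simp)
  have hV : V = G + (4 / 5 : ℝ) • (G - Z) := by rw [hratio]; module
  have hPZ : P - Z = (G - Z) + (P - G) := by abel
  have hP'Z : P' - Z = (5 : ℝ)⁻¹ • (G - Z) - (P - G) := by rw [hP', hQ', hV]; module
  have hQ'Z : Q' - Z = (G - Z) - (2 : ℝ)⁻¹ • (P - G) := by rw [hQ']; module
  obtain ⟨hb, hd, hc⟩ := conic_coeffs_of_vanish B (hBsymm _ _)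
    (by simpa only [hPZ] using hvanish P (by simp))
    (by simpa only [hP'Z] using hvanish P' (by simp))
    (by simpa only [hQ'Z] using hvanish Q' (by simp))
  have ha := B.apply_self_ne_zero_of_ne_zero hspan hB (hBsymm _ _) hb hd
  obtain ⟨x, y, hxy⟩ := hspan (R - Z)
  have hR' : R = x • (G - Z) + y • (P - G) + Z := sub_eq_iff_eq_add.1 hxy.symm
  have hKRZ : G - (1 / 2 : ℝ) • (R - G) - Z = ((3 - x) / 2) • (G - Z) + (-y / 2) • (P - G) := by
    rw [hR']; module
  rw [← hxy, conic_vanish_iff B (hBsymm _ _) hb hd hc ha] at hR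
  rw [hKRZ, conic_vanish_iff B (hBsymm _ _) hb hd hc ha] at hKR
  rcases complement_coords_of_conic hR hKR with ⟨rfl, rfl⟩ | ⟨rfl, rfl⟩
  · left; rw [hR']; module
  · right; rw [hR', hP', hQ', hV]; module

/-- In the configuration of Lemmas 3.1 and 3.2 (with `ZG/GV = 5/4`), the points `P`
and `P′` are the only points of the conic whose complement `K(R) = G − ½(R − G)` also
lies on the conic. -/
theorem only_P_P'_have_complement_on_conic (G V Z : ℝ × ℝ)
    (hcol : Collinear ℝ ({G, V, Z} : Set (ℝ × ℝ)))
    (hGV : G ≠ V) (hVZ : V ≠ Z) (hGZ : G ≠ Z)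
    (hratio : G - Z = (5/4 : ℝ) • (V - G))
    (P : ℝ × ℝ) (hP : P ∉ line[ℝ, G, Z])
    (Q' P' Q : ℝ × ℝ)
    (hQ' : Q' = G - (1/2 : ℝ) • (P - G))
    (hP' : P' = (2 : ℝ) • Q' - V)
    (hQ : Q = midpoint ℝ P V)
    (B : (ℝ × ℝ) →ₗ[ℝ] (ℝ × ℝ) →ₗ[ℝ] ℝ) (c : ℝ)
    (hB : B ≠ 0) (hBsymm : ∀ u v, B u v = B v u)
    (hvanish : ∀ X ∈ ({P, P', Q, Q'} : Set (ℝ × ℝ)), B (X - Z) (X - Z) + c = 0) :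
    ∀ R : ℝ × ℝ, B (R - Z) (R - Z) + c = 0 →
      B ((G - (1/2 : ℝ) • (R - G)) - Z) ((G - (1/2 : ℝ) • (R - G)) - Z) + c = 0 →
      R = P ∨ R = P' :=
  only_P_P'_have_complement_on_conic_general G V Z hGZ hratio P hP Q' P' Q hQ' hP' B c hB hBsymm
    hvanish
end

section
/- Let B be a positive-definite symmetric bilinear form on ℝ², Z a point, c < 0, and q(X) := B(X − Z, X − Z) + c. Let D be a point with D ≠ Z. If q(D) < 0 (D interior to the ellipse), then there exist exactly two points X with q(X) = 0 and q(2D − X) = 0; i.e., there is a unique unordered pair {B₁, C₁} of distinct points on the conic q = 0 whose midpoint is D. If q(D) > 0 (D exterior), then no point X satisfies q(X) = 0 and q(2D − X) = 0. -/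
/-!
Put `d = D - Z` and `v = X - D`, so that `X - Z = d + v` and `2D - X - Z = d - v`. Adding and
subtracting the two conic equations shows that they hold iff `B(d, v) = 0` and
`B(v, v) = -q(D)`. In the plane the `B`-orthogonal complement of `d ≠ 0` is a line, and the
positive definite form meets the level `-q(D)` on that line in exactly two opposite vectors
`±u` when `q(D) < 0`, and nowhere when `q(D) > 0`.
-/

open Module

theorem Module.Dual.exists_ker_eq_span_singleton {K V : Type*} [Field K] [AddCommGroup V]
    [Module K V] [FiniteDimensional K V] (hV : finrank K V = 2) {f : Dual K V} (hf : f ≠ 0) :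
    ∃ w ≠ 0, LinearMap.ker f = K ∙ w := by
  have hker : finrank K (LinearMap.ker f) = 1 := by
    have := Dual.finrank_ker_add_one_of_ne_zero hf
    omega
  obtain ⟨⟨w, hw_ker⟩, hw, hspan⟩ := finrank_eq_one_iff'.mp hker
  refine ⟨w, by simpa using hw, le_antisymm (fun v hv => ?_) ?_⟩
  · obtain ⟨k, hk⟩ := hspan ⟨v, hv⟩
    exact Submodule.mem_span_singleton.mpr ⟨k, congrArg Subtype.val hk⟩
  · exact (Submodule.span_singleton_le_iff_mem _ _).mpr hw_ker

namespace LinearMap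

variable {V : Type*} [AddCommGroup V] [Module ℝ V] (B : V →ₗ[ℝ] V →ₗ[ℝ] ℝ)

theorem chord_with_midpoint_iff (hB : ∀ u v, B u v = B v u) (Z D X : V) (c : ℝ) :
    (B (X - Z) (X - Z) + c = 0 ∧ B ((2 : ℝ) • D - X - Z) ((2 : ℝ) • D - X - Z) + c = 0) ↔
      B (D - Z) (X - D) = 0 ∧ B (X - D) (X - D) = -(B (D - Z) (D - Z) + c) := by
  have hX : X - Z = (D - Z) + (X - D) := by abel
  have hX' : (2 : ℝ) • D - X - Z = (D - Z) - (X - D) := by module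
  rw [hX, hX']
  generalize D - Z = d; generalize X - D = v
  simp only [map_add, map_sub, add_apply, sub_apply, hB v d]
  constructor <;> rintro ⟨h₁, h₂⟩ <;> constructor <;> linarith

theorem exists_smul_apply_smul_eq {w : V} (hw : 0 < B w w) {t : ℝ} (ht : 0 ≤ t) :
    ∃ s : ℝ, B (s • w) (s • w) = t := by
  refine ⟨√(t / B w w), ?_⟩
  simp only [map_smul, smul_apply, smul_eq_mul, ← mul_assoc,
    Real.mul_self_sqrt (div_nonneg ht hw.le)]
  field_simp

theorem exists_smul_eq_and_apply_eq_iff {u v : V} (hu : B u u ≠ 0) :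
    ((∃ k : ℝ, k • u = v) ∧ B v v = B u u) ↔ v = u ∨ v = -u := by
  constructor
  · rintro ⟨⟨k, rfl⟩, hk⟩
    simp only [map_smul, smul_apply, smul_eq_mul, ← mul_assoc] at hk
    rcases mul_self_eq_one_iff.mp ((mul_eq_right₀ hu).mp hk) with rfl | rfl <;> simp
  · rintro (rfl | rfl)
    · exact ⟨⟨1, one_smul ℝ v⟩, rfl⟩
    · exact ⟨⟨-1, neg_one_smul ℝ u⟩, by simp⟩

theorem exists_apply_self_eq_and_ker_eq_span [FiniteDimensional ℝ V] (hV : finrank ℝ V = 2)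
    (hB : ∀ w, w ≠ 0 → 0 < B w w) {d : V} (hd : d ≠ 0) {t : ℝ} (ht : 0 < t) :
    ∃ u, B u u = t ∧ ker (B d) = ℝ ∙ u := by
  have hBd : B d ≠ 0 := fun h => (hB d hd).ne' (by simp [h])
  obtain ⟨w, hw, hker⟩ := Dual.exists_ker_eq_span_singleton hV hBd
  obtain ⟨s, hs⟩ := B.exists_smul_apply_smul_eq (hB w hw) ht.le
  have hs0 : s ≠ 0 := by
    rintro rfl
    rw [zero_smul, map_zero] at hs
    exact ht.ne hs
  exact ⟨s • w, hs, by rw [hker, Submodule.span_singleton_smul_eq hs0.isUnit]⟩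

end LinearMap

theorem ellipse_chord_with_given_midpoint_general
    (B : (ℝ × ℝ) →ₗ[ℝ] (ℝ × ℝ) →ₗ[ℝ] ℝ)
    (hBsymm : ∀ u v, B u v = B v u)
    (hBpos : ∀ w : ℝ × ℝ, w ≠ 0 → 0 < B w w)
    (Z : ℝ × ℝ) (c : ℝ)
    (D : ℝ × ℝ) (hD : D ≠ Z) :
    (B (D - Z) (D - Z) + c < 0 →
      ∃ B₁ C₁ : ℝ × ℝ, B₁ ≠ C₁ ∧ midpoint ℝ B₁ C₁ = D ∧
        {X : ℝ × ℝ | B (X - Z) (X - Z) + c = 0 ∧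
            B ((2 : ℝ) • D - X - Z) ((2 : ℝ) • D - X - Z) + c = 0} =
          {B₁, C₁}) ∧
    (0 < B (D - Z) (D - Z) + c →
      ¬ ∃ X : ℝ × ℝ, B (X - Z) (X - Z) + c = 0 ∧
        B ((2 : ℝ) • D - X - Z) ((2 : ℝ) • D - X - Z) + c = 0) := by
  refine ⟨fun hinterior => ?_, fun hexterior ⟨X, hX⟩ => ?_⟩
  · have ht := neg_pos.mpr hinterior
    obtain ⟨u, hu_apply, hker⟩ :=
      B.exists_apply_self_eq_and_ker_eq_span (by simp) hBpos (sub_ne_zero.mpr hD) ht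
    have hu : u ≠ 0 := by
      rintro rfl
      rw [map_zero] at hu_apply
      exact ht.ne hu_apply
    refine ⟨D + u, D - u, fun h => hu ?_, midpoint_add_sub ℝ D u, ?_⟩
    · exact self_eq_neg.mp ((add_right_inj D).mp (h.trans (sub_eq_add_neg D u)))
    · ext X
      rw [Set.mem_ofPred_eq, B.chord_with_midpoint_iff hBsymm, ← hu_apply, ← LinearMap.mem_ker,
        hker, Submodule.mem_span_singleton, B.exists_smul_eq_and_apply_eq_iff (hu_apply ▸ ht.ne')]
      simp only [sub_eq_iff_eq_add', ← sub_eq_add_neg, Set.mem_insert_iff, Set.mem_singleton_iff]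
  · rw [B.chord_with_midpoint_iff hBsymm] at hX
    rcases eq_or_ne (X - D) 0 with h | h
    · simp only [h, map_zero] at hX
      linarith [hX.2]
    · linarith [hBpos _ h, hX.2]

/-- Chords of an ellipse with a prescribed midpoint `D ≠ Z`: if `D` is interior
(`q(D) < 0`) there are exactly two points `X` with `q(X) = 0` and `q(2D − X) = 0`,
i.e. a unique unordered pair of distinct points of the conic with midpoint `D`;
if `D` is exterior (`q(D) > 0`) there is none. -/
theorem ellipse_chord_with_given_midpoint
    (B : (ℝ × ℝ) →ₗ[ℝ] (ℝ × ℝ) →ₗ[ℝ] ℝ)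
    (hBsymm : ∀ u v, B u v = B v u)
    (hBpos : ∀ w : ℝ × ℝ, w ≠ 0 → 0 < B w w)
    (Z : ℝ × ℝ) (c : ℝ) (hc : c < 0)
    (D : ℝ × ℝ) (hD : D ≠ Z) :
    (B (D - Z) (D - Z) + c < 0 →
      ∃ B₁ C₁ : ℝ × ℝ, B₁ ≠ C₁ ∧ midpoint ℝ B₁ C₁ = D ∧
        {X : ℝ × ℝ | B (X - Z) (X - Z) + c = 0 ∧
            B ((2 : ℝ) • D - X - Z) ((2 : ℝ) • D - X - Z) + c = 0} =
          {B₁, C₁}) ∧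
    (0 < B (D - Z) (D - Z) + c →
      ¬ ∃ X : ℝ × ℝ, B (X - Z) (X - Z) + c = 0 ∧
        B ((2 : ℝ) • D - X - Z) ((2 : ℝ) • D - X - Z) + c = 0) :=
  ellipse_chord_with_given_midpoint_general B hBsymm hBpos Z c D hD
end

section
/- Let Z, Q, P′ be points of the Euclidean plane ℝ² with (Q − Z)·(P′ − Z) = 0 and ‖Q − Z‖ = ‖P′ − Z‖ ≠ 0, and set O := Q + P′ − Z (so that QZP′O is a square), S := midpoint(O, Q), and G := Z + (2/3)(S − Z). Let P be the reflection of P′ across the line through Z and G, let Q′ be the reflection of Q across this line, let K(W) := G − (1/2)(W − G), and let V := 2Q − P. Then: (i) G lies on the line through Q and P′; (ii) K(Z) = S, K(P′) = Q and K(P) = Q′; (iii) V lies on the line through P′ and Q′; and (iv) G − Z = (5/4)(V − G), i.e. the signed ratio ZG/GV = 5/4. -/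
/-!
Write `u = Q − Z`, `v = P′ − Z`: an orthogonal pair of equal length, so points are
`Z + a u + b v` and inner products are computed as for `(a, b) ∈ ℝ²`. Reflecting in a line
through `Z` is the point reflection in the foot of the perpendicular, which gives
`G = Z + (2u + v)/3`, `P = Z + (4u − 3v)/5`, `Q′ = Z + (3u + 4v)/5` and `V = Z + (6u + 3v)/5`;
every claim is then a linear identity in `u` and `v`.
-/

open EuclideanGeometry

section
variable {V P : Type*} [NormedAddCommGroup V] [InnerProductSpace ℝ V] [MetricSpace P]
  [NormedAddTorsor V P]

theorem EuclideanGeometry.reflection_eq_pointReflection {s : AffineSubspace ℝ P} [Nonempty s]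
    [s.direction.HasOrthogonalProjection] {c x : P} (hc : c ∈ s)
    (hx : x -ᵥ c ∈ s.directionᗮ) :
    reflection s x = Equiv.pointReflection c x := by
  rw [← vsub_vadd x c, reflection_orthogonal_vadd hc hx, Equiv.pointReflection_apply,
    vsub_vadd, neg_vsub_eq_vsub_rev]

end

section
variable {V : Type*} [NormedAddCommGroup V] [InnerProductSpace ℝ V] {u v : V}

theorem real_inner_smul_add_smul_of_inner_eq_zero_of_norm_eq
    (huv : inner ℝ u v = 0) (hnorm : ‖u‖ = ‖v‖) (a b c d : ℝ) :
    inner ℝ (a • u + b • v) (c • u + d • v) = (a * c + b * d) * ‖u‖ ^ 2 := by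
  have hvu : inner ℝ v u = 0 := by rwa [real_inner_comm]
  simp only [inner_add_left, inner_add_right, real_inner_smul_left, real_inner_smul_right,
    huv, hvu, real_inner_self_eq_norm_sq, ← hnorm]
  ring

theorem reflection_line_smul_add_smul_of_inner_eq_zero_of_norm_eq
    (huv : inner ℝ u v = 0) (hnorm : ‖u‖ = ‖v‖) (Z : V) {α β a b t : ℝ}
    -- the foot of the perpendicular is `Z + t • (α • u + β • v)`; stated without division
    (ht : t * (α ^ 2 + β ^ 2) = a * α + b * β) :
    reflection line[ℝ, Z, Z + α • u + β • v] (Z + a • u + b • v) =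
      Z + (2 * t * α - a) • u + (2 * t * β - b) • v := by
  have hfoot : AffineMap.lineMap Z (Z + α • u + β • v) t = Z + (t * α) • u + (t * β) • v := by
    rw [AffineMap.lineMap_apply_module']; module
  rw [reflection_eq_pointReflection (c := Z + (t * α) • u + (t * β) • v)]
  · rw [Equiv.pointReflection_apply, vsub_eq_sub, vadd_eq_add]; module
  · exact hfoot ▸ AffineMap.lineMap_mem_affineSpan_pair t Z _
  · rw [direction_affineSpan, vectorSpan_pair, Submodule.mem_orthogonal_singleton_iff_inner_right,
      vsub_eq_sub, vsub_eq_sub,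
      show Z - (Z + α • u + β • v) = (-α) • u + (-β) • v by module,
      show Z + a • u + b • v - (Z + (t * α) • u + (t * β) • v) = (a - t * α) • u + (b - t * β) • v
        by module,
      real_inner_smul_add_smul_of_inner_eq_zero_of_norm_eq huv hnorm]
    linear_combination ‖u‖ ^ 2 * ht

end

open EuclideanGeometry in
theorem square_construction_ratio_general (Z Q P' : EuclideanSpace ℝ (Fin 2))
    (hperp : inner ℝ (Q - Z) (P' - Z) = (0 : ℝ))
    (hlen : ‖Q - Z‖ = ‖P' - Z‖)
    (O S G P Q' V : EuclideanSpace ℝ (Fin 2))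
    (hO : O = Q + P' - Z)
    (hS : S = midpoint ℝ O Q)
    (hG : G = Z + (2/3 : ℝ) • (S - Z))
    (hP : P = EuclideanGeometry.reflection (line[ℝ, Z, G]) P')
    (hQ' : Q' = EuclideanGeometry.reflection (line[ℝ, Z, G]) Q)
    (K : EuclideanSpace ℝ (Fin 2) → EuclideanSpace ℝ (Fin 2))
    (hK : ∀ W, K W = G - (1/2 : ℝ) • (W - G))
    (hV : V = (2 : ℝ) • Q - P) :
    G ∈ line[ℝ, Q, P'] ∧
    (K Z = S ∧ K P' = Q ∧ K P = Q') ∧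
    V ∈ line[ℝ, P', Q'] ∧
    G - Z = (5/4 : ℝ) • (V - G) := by
  obtain ⟨u, rfl⟩ : ∃ u, Q = Z + u := ⟨Q - Z, by abel⟩
  obtain ⟨v, rfl⟩ : ∃ v, P' = Z + v := ⟨P' - Z, by abel⟩
  rw [add_sub_cancel_left, add_sub_cancel_left] at hperp hlen
  have hS_eq : S = Z + u + (1/2 : ℝ) • v := by
    rw [hS, hO, midpoint_eq_smul_add, invOf_eq_inv]; module
  have hG_eq : G = Z + (2/3 : ℝ) • u + (1/3 : ℝ) • v := by rw [hG, hS_eq]; module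
  have hP_eq : P = Z + (4/5 : ℝ) • u - (3/5 : ℝ) • v := by
    rw [hP, hG_eq, show Z + v = Z + (0 : ℝ) • u + (1 : ℝ) • v by module,
      reflection_line_smul_add_smul_of_inner_eq_zero_of_norm_eq hperp hlen Z (t := 3/5)
        (by norm_num)]
    module
  have hQ'_eq : Q' = Z + (3/5 : ℝ) • u + (4/5 : ℝ) • v := by
    rw [hQ', hG_eq, show Z + u = Z + (1 : ℝ) • u + (0 : ℝ) • v by module,
      reflection_line_smul_add_smul_of_inner_eq_zero_of_norm_eq hperp hlen Z (t := 6/5)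
        (by norm_num)]
    module
  have hV_eq : V = Z + (6/5 : ℝ) • u + (3/5 : ℝ) • v := by rw [hV, hP_eq]; module
  refine ⟨?_, ⟨?_, ?_, ?_⟩, ?_, ?_⟩
  · convert AffineMap.lineMap_mem_affineSpan_pair (1/3 : ℝ) (Z + u) (Z + v)
    rw [AffineMap.lineMap_apply_module, hG_eq]; module
  · rw [hK, hG_eq, hS_eq]; module
  · rw [hK, hG_eq]; module
  · rw [hK, hG_eq, hP_eq, hQ'_eq]; module
  · convert AffineMap.lineMap_mem_affineSpan_pair (2 : ℝ) (Z + v) Q'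
    rw [AffineMap.lineMap_apply_module, hV_eq, hQ'_eq]; module
  · rw [hG_eq, hV_eq]; module

open EuclideanGeometry in
/-- The square construction of Theorem 3.4: starting from a square `QZP′O` inscribed
in a circle with center `Z`, with `S` the midpoint of `OQ`, `G = Z + (2/3)(S − Z)`,
`P` and `Q′` the reflections of `P′` and `Q` in the line `ZG`, `K` the complement map
with respect to `G`, and `V = 2Q − P`, one has: (i) `G` lies on line `QP′`;
(ii) `K(Z) = S`, `K(P′) = Q` and `K(P) = Q′`; (iii) `V` lies on line `P′Q′`;
and (iv) `G − Z = (5/4)(V − G)`. -/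
theorem square_construction_ratio (Z Q P' : EuclideanSpace ℝ (Fin 2))
    (hperp : inner ℝ (Q - Z) (P' - Z) = (0 : ℝ))
    (hlen : ‖Q - Z‖ = ‖P' - Z‖) (hne : ‖Q - Z‖ ≠ 0)
    (O S G P Q' V : EuclideanSpace ℝ (Fin 2))
    (hO : O = Q + P' - Z)
    (hS : S = midpoint ℝ O Q)
    (hG : G = Z + (2/3 : ℝ) • (S - Z))
    (hP : P = EuclideanGeometry.reflection (line[ℝ, Z, G]) P')
    (hQ' : Q' = EuclideanGeometry.reflection (line[ℝ, Z, G]) Q)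
    (K : EuclideanSpace ℝ (Fin 2) → EuclideanSpace ℝ (Fin 2))
    (hK : ∀ W, K W = G - (1/2 : ℝ) • (W - G))
    (hV : V = (2 : ℝ) • Q - P) :
    G ∈ line[ℝ, Q, P'] ∧
    (K Z = S ∧ K P' = Q ∧ K P = Q') ∧
    V ∈ line[ℝ, P', Q'] ∧
    G - Z = (5/4 : ℝ) • (V - G) :=
  square_construction_ratio_general Z Q P' hperp hlen O S G P Q' V hO hS hG hP hQ' K hK hV
end

section
/- Let E(x,y,z) := x²(y+z) + y²(z+x) + z²(x+y) − 2xyz. If x, y, z are complex numbers satisfying E(x,y,z) = 0, 2x(y+z) + (y−z)² = 0, 2y(z+x) + (z−x)² = 0, and 2z(x+y) + (x−y)² = 0, then x = y = z = 0. In other words, the projective plane cubic E = 0 has no singular points. -/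
/-- The projective plane cubic `E(x,y,z) = x²(y+z) + y²(z+x) + z²(x+y) − 2xyz = 0`
has no singular points: the only common complex zero of `E` and its three partial
derivatives is the origin. -/
theorem cubic_E_nonsingular (x y z : ℂ)
    (hE : x ^ 2 * (y + z) + y ^ 2 * (z + x) + z ^ 2 * (x + y) - 2 * x * y * z = 0)
    (hx : 2 * x * (y + z) + (y - z) ^ 2 = 0)
    (hy : 2 * y * (z + x) + (z - x) ^ 2 = 0)
    (hz : 2 * z * (x + y) + (x - y) ^ 2 = 0) :
    x = 0 ∧ y = 0 ∧ z = 0 := by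
  have d1 : (x - y) * (4 * z - x - y) = 0 := by linear_combination hx - hy
  have d2 : (y - z) * (4 * x - y - z) = 0 := by linear_combination hy - hz
  have d3 : (z - x) * (4 * y - z - x) = 0 := by linear_combination hz - hx
  rcases mul_eq_zero.mp d1 with h1 | h1
  · rcases mul_eq_zero.mp d2 with h2 | h2
    · -- x = y, y = z
      have key : x ^ 2 = 0 := by
        linear_combination hx / 4 + x * h1 + (x / 2 - (y - z) / 4) * h2
      have x0 : x = 0 := by
        have := sq_eq_zero_iff.mp (by linear_combination key : x ^ 2 = 0)
        exact this
      refine ⟨x0, by linear_combination x0 - h1, by linear_combination x0 - h1 - h2⟩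
    · -- x = y, 4x = y + z
      have key : x ^ 2 = 0 := by
        linear_combination hx / 12 - ((8 * x + 4 * (x - y) - 4 * (4 * x - y - z)) / 12) * h1
          - (((4 * x - y - z) - 6 * x) / 12) * h2
      have x0 : x = 0 := sq_eq_zero_iff.mp key
      have y0 : y = 0 := by linear_combination x0 - h1
      exact ⟨x0, y0, by linear_combination 4 * x0 - y0 - h2⟩
  · rcases mul_eq_zero.mp d2 with h2 | h2
    · -- 4z = x + y, y = z
      have key : z ^ 2 = 0 := by
        linear_combination hz / 12 + ((8 * z - 4 * (y - z) - 4 * (4 * z - x - y)) / 12) * h2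
          - (((4 * z - x - y) - 6 * z) / 12) * h1
      have z0 : z = 0 := sq_eq_zero_iff.mp key
      have y0 : y = 0 := by linear_combination z0 + h2
      exact ⟨by linear_combination 4 * z0 - y0 - h1, y0, z0⟩
    · rcases mul_eq_zero.mp d3 with h3 | h3
      · -- 4z = x + y, 4x = y + z, z = x
        have key : x ^ 2 = 0 := by
          linear_combination hy / 12 + ((4 * x + 2 * (z - x)) / 12) * h2
            + (((z - x) - 2 * x) / 12) * h3
        have x0 : x = 0 := sq_eq_zero_iff.mp key
        have z0 : z = 0 := by linear_combination x0 + h3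
        exact ⟨x0, by linear_combination 4 * x0 - z0 - h2, z0⟩
      · -- all primed: purely linear
        have x0 : x = 0 := by linear_combination (h1 + 3 * h2 + h3) / 10
        have y0 : y = 0 := by linear_combination (h2 + 3 * h3 + h1) / 10
        have z0 : z = 0 := by linear_combination (h3 + 3 * h1 + h2) / 10
        exact ⟨x0, y0, z0⟩
end

section
/- Let E(x,y,z) := x²(y+z) + y²(z+x) + z²(x+y) − 2xyz. Then: (i) for all real x, y, E(x, y, −y) = 4xy²; consequently (ii) every nonzero real triple (x,y,z) with E(x,y,z) = 0 and y + z = 0 satisfies y = z = 0 (the point (1:0:0)) or x = 0 (the point (0:1:−1)); and (iii) the univariate polynomial t ↦ E(1, t, −t) = 4t² has a root of multiplicity exactly 2 at t = 0, so the line y + z = 0 is tangent to the cubic E = 0 at (1:0:0). -/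
open Polynomial in
/-- (i) `E(x, y, −y) = 4xy²`; (ii) the only nonzero solutions of `E = 0` on the line
`y + z = 0` are `(1:0:0)` and `(0:1:−1)`; (iii) the polynomial `t ↦ E(1, t, −t)` has a
root of multiplicity exactly `2` at `t = 0`, so the line `y + z = 0` is tangent to the
cubic `E = 0` at `(1:0:0)`. -/
theorem cubic_E_tangent_anticomplementary_side :
    (∀ x y : ℝ,
      x ^ 2 * (y + -y) + y ^ 2 * (-y + x) + (-y) ^ 2 * (x + y) - 2 * x * y * (-y) =
        4 * x * y ^ 2) ∧
    (∀ x y z : ℝ, (x, y, z) ≠ (0, 0, 0) →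
      x ^ 2 * (y + z) + y ^ 2 * (z + x) + z ^ 2 * (x + y) - 2 * x * y * z = 0 →
      y + z = 0 → (y = 0 ∧ z = 0) ∨ x = 0) ∧
    Polynomial.rootMultiplicity (0 : ℝ)
      ((1 : ℝ[X]) ^ 2 * (X + -X) + X ^ 2 * (-X + 1) + (-X) ^ 2 * (1 + X)
        - 2 * 1 * X * (-X)) = 2 := by
  refine ⟨fun x y => by ring, fun x y z _ hE hl => ?_, ?_⟩
  · have hz : z = -y := by linarith
    subst hz
    have h4 : 4 * x * y ^ 2 = 0 := by nlinarith [hE]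
    rcases mul_eq_zero.mp h4 with h | h
    · rcases mul_eq_zero.mp h with h | h
      · norm_num at h
      · exact Or.inr h
    · have : y = 0 := by
        have := pow_eq_zero_iff (n := 2) (by norm_num) |>.mp h
        exact this
      exact Or.inl ⟨this, by rw [this]; ring⟩
  · have h : ((1 : ℝ[X]) ^ 2 * (X + -X) + X ^ 2 * (-X + 1) + (-X) ^ 2 * (1 + X)
        - 2 * 1 * X * (-X)) = Polynomial.C 4 * (X - Polynomial.C 0) ^ 2 := by
      simp only [map_ofNat, Polynomial.C_0, sub_zero]
      ring
    rw [h, Polynomial.rootMultiplicity_mul (by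
      simp only [Polynomial.C_0, sub_zero]
      intro hc
      exact absurd hc (mul_ne_zero (by simp) (pow_ne_zero _ Polynomial.X_ne_zero)))]
    rw [Polynomial.rootMultiplicity_C, Polynomial.rootMultiplicity_X_sub_C_pow]
end

section
/- Let E(x,y,z) := x²(y+z) + y²(z+x) + z²(x+y) − 2xyz. If x, y, z are real numbers with x + y + z = 1, E(x,y,z) = 0, and (x,y,z) is none of (1,0,0), (0,1,0), (0,0,1), then at least one of x + y, y + z, z + x is strictly negative. -/
/-- Every point of the cubic `ℰ : E(x,y,z) = 0` other than the vertices `A`, `B`, `C`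
is exterior to the anticomplementary triangle: in normalized barycentric coordinates,
at least one of `x+y`, `y+z`, `z+x` is strictly negative. -/
theorem cubic_E_exterior_anticomplementary (x y z : ℝ)
    (hsum : x + y + z = 1)
    (hE : x ^ 2 * (y + z) + y ^ 2 * (z + x) + z ^ 2 * (x + y) - 2 * x * y * z = 0)
    (hA : (x, y, z) ≠ (1, 0, 0)) (hB : (x, y, z) ≠ (0, 1, 0))
    (hC : (x, y, z) ≠ (0, 0, 1)) :
    x + y < 0 ∨ y + z < 0 ∨ z + x < 0 := by
  by_contra h
  push_neg at h
  obtain ⟨h1, h2, h3⟩ := h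
  -- x, y, z are all nonnegative
  have hx : 0 ≤ x := by
    by_contra hx; push_neg at hx
    nlinarith [mul_nonneg h3 h1, mul_nonneg h2 (mul_nonneg h3 h1), sq_nonneg (y - z),
      mul_nonneg (mul_nonneg h3 h1) h1, mul_nonneg (mul_nonneg h3 h1) h3]
  have hy : 0 ≤ y := by
    by_contra hy; push_neg at hy
    nlinarith [mul_nonneg h1 h2, mul_nonneg h3 (mul_nonneg h1 h2), sq_nonneg (z - x),
      mul_nonneg (mul_nonneg h1 h2) h2, mul_nonneg (mul_nonneg h1 h2) h1]
  have hz : 0 ≤ z := by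
    by_contra hz; push_neg at hz
    nlinarith [mul_nonneg h2 h3, mul_nonneg h1 (mul_nonneg h2 h3), sq_nonneg (x - y),
      mul_nonneg (mul_nonneg h2 h3) h3, mul_nonneg (mul_nonneg h2 h3) h2]
  rcases eq_or_lt_of_le hx with hx0 | hxp
  · -- x = 0 : yz = 0, so vertex B or C
    have hyz : y * z = 0 := by nlinarith
    rcases mul_eq_zero.mp hyz with h0 | h0
    · exact hC (by simp [← hx0, h0]; linarith)
    · exact hB (by simp [← hx0, h0]; linarith)
  rcases eq_or_lt_of_le hy with hy0 | hyp
  · have hzx : z * x = 0 := by nlinarith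
    rcases mul_eq_zero.mp hzx with h0 | h0
    · exact hA (by simp [← hy0, h0]; linarith)
    · exact hC (by simp [← hy0, h0]; linarith)
  rcases eq_or_lt_of_le hz with hz0 | hzp
  · have hxy : x * y = 0 := by nlinarith
    rcases mul_eq_zero.mp hxy with h0 | h0
    · exact hB (by simp [← hz0, h0]; linarith)
    · exact hA (by simp [← hz0, h0]; linarith)
  -- all positive: E > 0
  nlinarith [mul_pos hxp hyp, mul_pos hyp hzp, mul_pos hzp hxp,
    mul_pos (mul_pos hxp hyp) hzp, sq_nonneg (x - y), sq_nonneg (y - z), sq_nonneg (z - x),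
    mul_nonneg (mul_nonneg hx hy) (sq_nonneg (x - y))]
end

section
/- Let E(x,y,z) := x²(y+z) + y²(z+x) + z²(x+y) − 2xyz. If x, y, z are real numbers satisfying E(x,y,z) = 0 and xy + yz + zx = 0, then at least two of x, y, z are zero; i.e., (y = 0 and z = 0) or (z = 0 and x = 0) or (x = 0 and y = 0). -/
/-- Other than the vertices, no point of the Steiner circumellipse
`xy + yz + zx = 0` lies on the cubic `ℰ : E(x,y,z) = 0`. -/
theorem cubic_E_meets_steiner_only_at_vertices (x y z : ℝ)
    (hE : x ^ 2 * (y + z) + y ^ 2 * (z + x) + z ^ 2 * (x + y) - 2 * x * y * z = 0)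
    (hS : x * y + y * z + z * x = 0) :
    (y = 0 ∧ z = 0) ∨ (z = 0 ∧ x = 0) ∨ (x = 0 ∧ y = 0) := by
  have h : x * y * z = 0 := by linear_combination (-1/5) * hE + ((x + y + z)/5) * hS
  rcases mul_eq_zero.mp h with h' | hz
  · rcases mul_eq_zero.mp h' with hx | hy
    · -- x = 0, then y*z = 0
      have : y * z = 0 := by linear_combination hS - y * hx - z * hx
      rcases mul_eq_zero.mp this with hy | hz
      · exact Or.inr (Or.inr ⟨hx, hy⟩)
      · exact Or.inr (Or.inl ⟨hz, hx⟩)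
    · have : x * z = 0 := by linear_combination hS - x * hy - z * hy
      rcases mul_eq_zero.mp this with hx | hz
      · exact Or.inr (Or.inr ⟨hx, hy⟩)
      · exact Or.inl ⟨hy, hz⟩
  · have : x * y = 0 := by linear_combination hS - y * hz - x * hz
    rcases mul_eq_zero.mp this with hx | hy
    · exact Or.inr (Or.inl ⟨hz, hx⟩)
    · exact Or.inl ⟨hy, hz⟩
end

section
/- Let W be the elliptic curve over ℝ with affine equation y² = x³ + x² + 4x + 4, and let P be the point (2, 2√6) on W (note (2√6)² = 24 = 2³ + 2² + 4·2 + 4). Then P has infinite order in the group of points of W: for every natural number n ≥ 1, n • P is not the identity element. -/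
/-!
Every point `(a, y)` of `y² = x³ + x² + 4x + 4` with `a ∈ ℚ` and `y ≠ 0` doubles to a point whose
`x`-coordinate is again rational, namely `(a⁴ - 8a² - 32a) / (4(a³ + a² + 4a + 4))`. When
`v₂(a) < 0` the leading terms dominate 2-adically, so doubling lowers `v₂` of the `x`-coordinate by
exactly `2`. Since `2P = (-5/6, _)` has `v₂ = -1`, the points `2ᵏ • 2P` are pairwise distinct, which
is impossible if `P` has finite order.
-/

open WeierstrassCurve Affine

theorem padicValRat_add_eq_of_lt {p : ℕ} [Fact p.Prime] {q r : ℚ} (hq : q ≠ 0) (hr : r ≠ 0)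
    (h : padicValRat p q < padicValRat p r) : padicValRat p (q + r) = padicValRat p q := by
  refine padicValRat.add_eq_of_lt (fun hqr ↦ ?_) hq hr h
  rw [eq_neg_of_add_eq_zero_right hqr, padicValRat.neg] at h
  exact h.false

theorem ne_zero_of_padicValRat_ne_zero {p : ℕ} {q : ℚ} (hq : padicValRat p q ≠ 0) : q ≠ 0 := by
  rintro rfl
  exact hq padicValRat.zero

namespace TwoSqrtSix

local notation "v" => padicValRat 2

lemma padicValRat_two_pow (k : ℕ) : v (2 ^ k) = k := by
  rw [padicValRat.pow, show v 2 = 1 by simpa using padicValRat.self (p := 2) one_lt_two, mul_one]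

lemma padicValRat_two_pow_mul {q : ℚ} (hq : q ≠ 0) (k : ℕ) : v (2 ^ k * q) = k + v q := by
  rw [padicValRat.mul (by positivity) hq, padicValRat_two_pow]

section Valuations

variable {a : ℚ}

lemma padicValRat_add_two_pow (ha : v a < 0) (k : ℕ) : v (a + 2 ^ k) = v a := by
  refine padicValRat_add_eq_of_lt (ne_zero_of_padicValRat_ne_zero ha.ne) (by positivity) ?_
  exact padicValRat_two_pow k ▸ ha.trans_le (Int.natCast_nonneg k)

lemma padicValRat_cubic (ha : v a < 0) : v (a ^ 3 + a ^ 2 + 4 * a + 4) = 3 * v a := by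
  have ha₀ := ne_zero_of_padicValRat_ne_zero ha.ne
  have hsq : v ((a + 2 ^ 1) ^ 2) = 2 * v a := by
    rw [padicValRat.pow, padicValRat_add_two_pow ha]
    rfl
  have hsq₀ : (a + 2 ^ 1) ^ 2 ≠ 0 := ne_zero_of_padicValRat_ne_zero (p := 2) (by omega)
  calc v (a ^ 3 + a ^ 2 + 4 * a + 4) = v (a ^ 3 + (a + 2 ^ 1) ^ 2) := by ring_nf
    _ = 3 * v a := by
      rw [padicValRat_add_eq_of_lt (pow_ne_zero 3 ha₀) hsq₀ (by rw [padicValRat.pow, hsq]; omega),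
        padicValRat.pow]
      rfl

lemma padicValRat_quartic (ha : v a < 0) : v (a ^ 4 - 8 * a ^ 2 - 32 * a) = 4 * v a := by
  have ha₀ := ne_zero_of_padicValRat_ne_zero ha.ne
  have ha₄ : v (a + 2 ^ 2) = v a := padicValRat_add_two_pow ha 2
  have hprod₀ : a * (a + 2 ^ 2) ≠ 0 :=
    mul_ne_zero ha₀ (ne_zero_of_padicValRat_ne_zero (p := 2) (by omega))
  have hrest : v (-(2 ^ 3 * (a * (a + 2 ^ 2)))) = 3 + 2 * v a := by
    rw [padicValRat.neg, padicValRat_two_pow_mul hprod₀,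
      padicValRat.mul ha₀ (right_ne_zero_of_mul hprod₀), ha₄]
    push_cast
    ring
  calc v (a ^ 4 - 8 * a ^ 2 - 32 * a) = v (a ^ 4 + -(2 ^ 3 * (a * (a + 2 ^ 2)))) := by ring_nf
    _ = 4 * v a := by
      rw [padicValRat_add_eq_of_lt (pow_ne_zero 4 ha₀) (by simpa using hprod₀)
        (by rw [padicValRat.pow, hrest]; omega), padicValRat.pow]
      rfl

end Valuations

noncomputable abbrev W₀ : Affine ℝ := ⟨0, 1, 0, 4, 4⟩

lemma equation_iff_sq {x y : ℝ} : W₀.Equation x y ↔ y ^ 2 = x ^ 3 + x ^ 2 + 4 * x + 4 := by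
  rw [equation_iff]
  ring_nf

/-- `λ² - 1 - 2a` for the tangent slope `λ = (3a² + 2a + 4) / 2y`, with `y²` replaced by
`a³ + a² + 4a + 4`. -/
def doubleX (a : ℚ) : ℚ := (a ^ 4 - 8 * a ^ 2 - 32 * a) / (4 * (a ^ 3 + a ^ 2 + 4 * a + 4))

lemma padicValRat_doubleX {a : ℚ} (ha : v a < 0) : v (doubleX a) = v a - 2 := by
  have hnum := padicValRat_quartic ha
  have hden : v (2 ^ 2 * (a ^ 3 + a ^ 2 + 4 * a + 4)) = 2 + 3 * v a := by
    rw [padicValRat_two_pow_mul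
      (ne_zero_of_padicValRat_ne_zero (p := 2) (by rw [padicValRat_cubic ha]; omega)),
      padicValRat_cubic ha]
    rfl
  norm_num at hden
  rw [doubleX, padicValRat.div (ne_zero_of_padicValRat_ne_zero (p := 2) (by omega))
    (ne_zero_of_padicValRat_ne_zero (p := 2) (by omega))]
  omega

lemma exists_add_self_eq_some_doubleX {a : ℚ} {y : ℝ} (h : W₀.Nonsingular a y) (hy : y ≠ 0) :
    ∃ (y' : ℝ) (h' : W₀.Nonsingular (doubleX a) y'),
      Point.some _ _ h + Point.some _ _ h = Point.some _ _ h' := by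
  have hy' : y ≠ W₀.negY a y := by
    simp only [negY]
    contrapose! hy
    linarith
  have hf : (a : ℝ) ^ 3 + a ^ 2 + 4 * a + 4 = y ^ 2 := (equation_iff_sq.mp h.1).symm
  have hX : W₀.addX a a (W₀.slope a a y y) = doubleX a := by
    rw [slope_of_Y_ne rfl hy']
    simp only [addX, negY, doubleX]
    push_cast
    rw [hf, show y - (-y - 0 * (a : ℝ) - 0) = 2 * y by ring]
    field_simp
    linear_combination 16 * (2 * (a : ℝ) + 1) * hf
  refine ⟨_, hX ▸ nonsingular_add h h (fun hxy ↦ hy' hxy.2), ?_⟩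
  rw [Point.add_self_of_Y_ne hy', Point.some.injEq]
  exact ⟨hX, rfl⟩

def HasRatXOfValuation (n : ℤ) (P : W₀.Point) : Prop :=
  ∃ (a : ℚ) (y : ℝ) (h : W₀.Nonsingular a y), P = .some _ _ h ∧ v a = n

namespace HasRatXOfValuation

variable {n : ℤ} {P : W₀.Point}

lemma unique {m : ℤ} (hn : HasRatXOfValuation n P) (hm : HasRatXOfValuation m P) : n = m := by
  obtain ⟨a, y, h, rfl, rfl⟩ := hn
  obtain ⟨b, z, h', he, rfl⟩ := hm
  rw [Point.some.injEq, Rat.cast_inj] at he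
  rw [he.1]

lemma two_nsmul (hP : HasRatXOfValuation n P) (hn : n < 0) :
    HasRatXOfValuation (n - 2) (2 • P) := by
  obtain ⟨a, y, h, rfl, rfl⟩ := hP
  have hf : ((a ^ 3 + a ^ 2 + 4 * a + 4 : ℚ) : ℝ) = y ^ 2 := by
    push_cast
    exact (equation_iff_sq.mp h.1).symm
  have hy : y ≠ 0 := by
    rintro rfl
    have hf₀ : a ^ 3 + a ^ 2 + 4 * a + 4 = 0 := by exact_mod_cast hf.trans (zero_pow two_ne_zero)
    have := padicValRat_cubic hn
    rw [hf₀, padicValRat.zero] at this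
    omega
  obtain ⟨y', h', hdouble⟩ := exists_add_self_eq_some_doubleX h hy
  exact ⟨doubleX a, y', h', by rw [two_nsmul, hdouble], padicValRat_doubleX hn⟩

lemma two_pow_nsmul (hP : HasRatXOfValuation n P) (hn : n < 0) (k : ℕ) :
    HasRatXOfValuation (n - 2 * k) (2 ^ k • P) := by
  induction k with
  | zero => simpa using hP
  | succ k ih =>
    rw [pow_succ, mul_nsmul]
    convert ih.two_nsmul (by omega) using 1
    push_cast
    ring

lemma not_isOfFinAddOrder (hP : HasRatXOfValuation n P) (hn : n < 0) : ¬IsOfFinAddOrder P := by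
  intro hfin
  have hinj : Function.Injective fun k : ℕ ↦ 2 ^ k • P := by
    intro i j (hij : 2 ^ i • P = 2 ^ j • P)
    have := (hP.two_pow_nsmul hn i).unique (hij ▸ hP.two_pow_nsmul hn j)
    omega
  exact Set.infinite_of_injective_forall_mem hinj
    (fun k ↦ nsmul_mem (AddSubmonoid.mem_multiples P) _) hfin.finite_multiples

end HasRatXOfValuation

lemma hasRatXOfValuation_two_nsmul (h : W₀.Nonsingular 2 (2 * √6)) :
    HasRatXOfValuation (-1) (2 • .some _ _ h) := by
  have h₂ : W₀.Nonsingular ((2 : ℚ) : ℝ) (2 * √6) := by exact_mod_cast h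
  obtain ⟨y', h', hdouble⟩ := exists_add_self_eq_some_doubleX h₂ (by positivity)
  refine ⟨doubleX 2, y', h', ?_, ?_⟩
  · have hP : Point.some _ _ h = Point.some _ _ h₂ := by
      rw [Point.some.injEq]
      norm_num
    rw [two_nsmul, hP, hdouble]
  · rw [show doubleX 2 = -5 / 6 by norm_num [doubleX]]
    norm_num [padicValRat, padicValInt]
    rw [padicValNat.eq_zero_of_not_dvd (by norm_num), show 6 = 2 * 3 from rfl,
      padicValNat.mul (by norm_num) (by norm_num),
      padicValNat.eq_zero_of_not_dvd (n := 3) (by norm_num)]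
    simp

end TwoSqrtSix

/-- The point `(2, 2√6)` on the elliptic curve `y² = x³ + x² + 4x + 4` over `ℝ` has
infinite order: no positive multiple of it is the identity. -/
theorem point_two_two_sqrt_six_infinite_order (W : WeierstrassCurve ℝ)
    (hW : W = ⟨0, 1, 0, 4, 4⟩)
    (h : W.toAffine.Nonsingular 2 (2 * Real.sqrt 6)) :
    ∀ n : ℕ, 1 ≤ n → n • (WeierstrassCurve.Affine.Point.some _ _ h) ≠ 0 := by
  subst hW
  intro n hn hnP
  refine (TwoSqrtSix.hasRatXOfValuation_two_nsmul h).not_isOfFinAddOrder (by norm_num) ?_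
  exact (isOfFinAddOrder_iff_nsmul_eq_zero.mpr ⟨n, hn, hnP⟩).nsmul
end
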